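/- Fix vectors p₁,…,p₅, u₁,…,u₅ ∈ ℝ³ and let R be a 3 × 3 real matrix with Rᵀ · R = 1 and det R = 1 (a rotation). If (w, λ₁, λ₂, ρ₁,…,ρ₅, a, b, c, d, e) is a solution of the IOD system for the data (pᵢ, uᵢ), then (R·w, λ₁, λ₂, ρ₁,…,ρ₅, a, b, c, d, e) is a solution of the IOD system for the rotated data (R·pᵢ, R·uᵢ). -/

import Mathlib

/-- The cross product on `EuclideanSpace ℝ (Fin 3)`. -/
noncomputable def cross3 (x y : EuclideanSpace ℝ (Fin 3)) : EuclideanSpace ℝ (Fin 3) :=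
  (EuclideanSpace.equiv (Fin 3) ℝ).symm
    ![x 1 * y 2 - x 2 * y 1, x 2 * y 0 - x 0 * y 2, x 0 * y 1 - x 1 * y 0]

/-- The 15-equation polynomial system for angles-only initial orbit determination:
with `v₂ = λ₂ (w × u₁)`, `v₁ = λ₁ (v₂ × w)`, `rᵢ = pᵢ + ρᵢ uᵢ`, `xᵢ = ⟨rᵢ, v₁⟩`,
`yᵢ = ⟨rᵢ, v₂⟩`, the constraints are: `w`, `v₁`, `v₂` are unit vectors, each `rᵢ`
lies in the orbital plane, the five planar points lie on the normalized conic with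
coefficients `(a,b,c,d,e)`, and the two focal polynomials vanish. -/
noncomputable def IsIODSolution (p u : Fin 5 → EuclideanSpace ℝ (Fin 3))
    (w : EuclideanSpace ℝ (Fin 3)) (l₁ l₂ : ℝ) (ρ : Fin 5 → ℝ)
    (a b c d e : ℝ) : Prop :=
  let v₂ : EuclideanSpace ℝ (Fin 3) := l₂ • cross3 w (u 0)
  let v₁ : EuclideanSpace ℝ (Fin 3) := l₁ • cross3 v₂ w
  let r : Fin 5 → EuclideanSpace ℝ (Fin 3) := fun i => p i + ρ i • u i
  let x : Fin 5 → ℝ := fun i => (inner ℝ (r i) v₁ : ℝ)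
  let y : Fin 5 → ℝ := fun i => (inner ℝ (r i) v₂ : ℝ)
  (inner ℝ w w : ℝ) = 1 ∧ (inner ℝ v₁ v₁ : ℝ) = 1 ∧ (inner ℝ v₂ v₂ : ℝ) = 1 ∧
  (∀ i, (inner ℝ (r i) w : ℝ) = 0) ∧
  (∀ i, a * x i ^ 2 + b * y i ^ 2 + c * x i * y i + d * x i + e * y i + 1 = 0) ∧
  e ^ 2 - 4 * b - d ^ 2 + 4 * a = 0 ∧
  d * e - 2 * c = 0

/-- Action of a 3×3 matrix on `EuclideanSpace ℝ (Fin 3)` by matrix–vector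
multiplication. -/
noncomputable def matAct (R : Matrix (Fin 3) (Fin 3) ℝ)
    (v : EuclideanSpace ℝ (Fin 3)) : EuclideanSpace ℝ (Fin 3) :=
  (EuclideanSpace.equiv (Fin 3) ℝ).symm (R.mulVec (EuclideanSpace.equiv (Fin 3) ℝ v))

/-!
A rotation `R ∈ SO(3)` preserves inner products and commutes with the cross product, since
`(R x) × (R y) = det R • R (x × y)` for orthogonal `R`. Hence rotating the data and `w` rotates
`v₁`, `v₂` and every `rᵢ`, while each inner product in the system, and so every equation, is
unchanged.
-/

open Matrix

local notation "ℝ³" => EuclideanSpace ℝ (Fin 3)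

theorem Matrix.transpose_mulVec_cross_mulVec {K : Type*} [CommRing K]
    (A : Matrix (Fin 3) (Fin 3) K) (x y : Fin 3 → K) :
    Aᵀ *ᵥ ((A *ᵥ x) ⨯₃ (A *ᵥ y)) = A.det • (x ⨯₃ y) := by
  have rows : ∀ z, (![A *ᵥ z, A *ᵥ x, A *ᵥ y] : Matrix (Fin 3) (Fin 3) K) = of ![z, x, y] * Aᵀ :=
    fun z => by ext i j; fin_cases i <;> simp [mul_apply, mulVec, dotProduct, mul_comm]
  have triple : ∀ z, z ⬝ᵥ Aᵀ *ᵥ ((A *ᵥ x) ⨯₃ (A *ᵥ y)) = z ⬝ᵥ A.det • (x ⨯₃ y) := fun z => by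
    rw [dotProduct_mulVec, vecMul_transpose, triple_product_eq_det, rows, det_mul, det_transpose,
      dotProduct_smul, triple_product_eq_det, smul_eq_mul, mul_comm]
    rfl -- `of` is the identity on `Fin 3 → Fin 3 → K`
  ext i
  simpa using triple (Pi.single i 1)

theorem Matrix.mulVec_cross_mulVec {K : Type*} [CommRing K] {A : Matrix (Fin 3) (Fin 3) K}
    (hA : Aᵀ * A = 1) (hdet : A.det = 1) (x y : Fin 3 → K) :
    (A *ᵥ x) ⨯₃ (A *ᵥ y) = A *ᵥ (x ⨯₃ y) := by
  simpa [mulVec_mulVec, mul_eq_one_comm.mp hA, hdet] using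
    congrArg (A *ᵥ ·) (transpose_mulVec_cross_mulVec A x y)

theorem Matrix.mulVec_dotProduct_mulVec {K : Type*} [CommRing K] {n : Type*} [Fintype n]
    [DecidableEq n] {A : Matrix n n K} (hA : Aᵀ * A = 1) (x y : n → K) :
    (A *ᵥ x) ⬝ᵥ (A *ᵥ y) = x ⬝ᵥ y := by
  rw [dotProduct_mulVec, ← mulVec_transpose, mulVec_mulVec, hA, one_mulVec]

theorem cross3_eq_crossProduct (x y : ℝ³) : cross3 x y = WithLp.toLp 2 (x.ofLp ⨯₃ y.ofLp) := by
  ext i; fin_cases i <;> simp [cross3, cross_apply]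

theorem IsIODSolution.map {p u : Fin 5 → ℝ³} {w : ℝ³} {l₁ l₂ : ℝ} {ρ : Fin 5 → ℝ}
    {a b c d e : ℝ} (f : ℝ³ →ₗᵢ[ℝ] ℝ³) (hf : ∀ x y, cross3 (f x) (f y) = f (cross3 x y))
    (h : IsIODSolution p u w l₁ l₂ ρ a b c d e) :
    IsIODSolution (fun i => f (p i)) (fun i => f (u i)) (f w) l₁ l₂ ρ a b c d e := by
  obtain ⟨hw, hv₁, hv₂, hr, hconic, hfocal₁, hfocal₂⟩ := h
  simp only [IsIODSolution, hf, ← f.map_smul, ← f.map_add, f.inner_map_map]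
  exact ⟨hw, hv₁, hv₂, hr, hconic, hfocal₁, hfocal₂⟩

/-- Rotation equivariance of the IOD system: rotating the data `(pᵢ, uᵢ)` and `w`
by `R ∈ SO(3)` takes solutions to solutions. -/
theorem iod_rotation_equivariance (p u : Fin 5 → EuclideanSpace ℝ (Fin 3))
    (R : Matrix (Fin 3) (Fin 3) ℝ) (hR : R.transpose * R = 1) (hdet : R.det = 1)
    (w : EuclideanSpace ℝ (Fin 3)) (l₁ l₂ : ℝ) (ρ : Fin 5 → ℝ) (a b c d e : ℝ)
    (h : IsIODSolution p u w l₁ l₂ ρ a b c d e) :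
    IsIODSolution (fun i => matAct R (p i)) (fun i => matAct R (u i))
      (matAct R w) l₁ l₂ ρ a b c d e := by
  let f : ℝ³ →ₗᵢ[ℝ] ℝ³ := R.toEuclideanLin.isometryOfInner fun x y => by
    simp [EuclideanSpace.inner_eq_star_dotProduct, mulVec_dotProduct_mulVec hR]
  have hf : ∀ x y, cross3 (f x) (f y) = f (cross3 x y) := fun x y => by
    simp [f, cross3_eq_crossProduct, mulVec_cross_mulVec hR hdet]
  -- `f` agrees with `matAct R` definitionally
  exact h.map f hf
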